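/- arXiv:2410.19831 — 2 statements merged into one kernel-verified Lean document; each statement's English description precedes it below -/
import Mathlib

section
/- Let x_0, …, x_n be the (n+1) distinct roots of the Laguerre polynomial L_{n+1}, and let w_0, …, w_n satisfy ∑_{k=0}^n w_k x_k^j = ∫₀^∞ e^{-x} x^j dx for j = 0, …, n. Then for every polynomial p of degree at most 2n+1, ∫₀^∞ e^{-x} p(x) dx = ∑_{k=0}^n w_k p(x_k). -/
/-!
Both sides of the claimed identity are linear functionals on `ℝ[X]`, and by hypothesis they agree
in degree `≤ n`. With `L = (n+1)! L_{n+1}`, divide `p = L q + r` with `deg q, deg r ≤ n`. The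
quadrature kills `L q` because the nodes are roots of `L`, and the integral kills it because
`L` comes from the Rodrigues formula: `n + 1` integrations by parts against `e^{-t}` move all
derivatives onto `q`, which has degree `≤ n`.
-/

/-- The `n`-th Laguerre polynomial via the Rodrigues formula. -/
noncomputable def lag (n : ℕ) (x : ℝ) : ℝ :=
  ((n.factorial : ℝ))⁻¹ * Real.exp x * iteratedDeriv n (fun y => y ^ n * Real.exp (-y)) x

open MeasureTheory Polynomial Set
open scoped Nat

namespace Polynomial

variable {R M : Type*} [CommSemiring R] [AddCommMonoid M] [Module R M]

theorem linearMap_apply_eq_of_natDegree_le {f g : R[X] →ₗ[R] M} {n : ℕ}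
    (h : ∀ j ≤ n, f (X ^ j) = g (X ^ j)) {p : R[X]} (hp : p.natDegree ≤ n) : f p = g p := by
  rw [p.as_sum_range' (n + 1) (Nat.lt_succ_of_le hp)]
  simp only [map_sum, ← smul_X_eq_monomial, map_smul]
  exact Finset.sum_congr rfl fun j hj => by rw [h j (Nat.lt_succ_iff.mp (Finset.mem_range.mp hj))]

theorem linearMap_apply_eq_of_natDegree_le_two_mul_add_one {K : Type*} [Field K] [Module K M]
    {f g : K[X] →ₗ[K] M} {n : ℕ} {L : K[X]} (hL : L.natDegree = n + 1)
    (hlow : ∀ j ≤ n, f (X ^ j) = g (X ^ j))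
    (horth : ∀ q : K[X], q.natDegree ≤ n → f (L * q) = g (L * q))
    {p : K[X]} (hp : p.natDegree ≤ 2 * n + 1) : f p = g p := by
  have hL0 : L ≠ 0 := ne_zero_of_natDegree_gt (n := n) (by omega)
  set L₁ := L * C L.leadingCoeff⁻¹
  have hmonic : L₁.Monic := monic_mul_leadingCoeff_inv hL0
  have hdeg : L₁.natDegree = n + 1 := by
    rw [natDegree_eq_of_degree_eq (degree_mul_leadingCoeff_inv L hL0), hL]
  have hrem : (p %ₘ L₁).natDegree ≤ n := by
    have := natDegree_modByMonic_lt p hmonic (fun h => by simp [h] at hdeg)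
    omega
  have hquot : (C L.leadingCoeff⁻¹ * (p /ₘ L₁)).natDegree ≤ n :=
    (natDegree_C_mul_le _ _).trans (by rw [natDegree_divByMonic p hmonic, hdeg]; omega)
  rw [← modByMonic_add_div p L₁, map_add, map_add, mul_assoc,
    linearMap_apply_eq_of_natDegree_le hlow hrem, horth _ hquot]

end Polynomial

section Quadrature

variable {ι R : Type*} [Fintype ι] [CommSemiring R]

noncomputable def quadrature (x w : ι → R) : R[X] →ₗ[R] R :=
  ∑ k, w k • leval (x k)

theorem quadrature_apply (x w : ι → R) (p : R[X]) :
    quadrature x w p = ∑ k, w k * p.eval (x k) := by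
  simp [quadrature]

end Quadrature

theorem integrableOn_exp_neg_mul_pow (i : ℕ) :
    IntegrableOn (fun t : ℝ => Real.exp (-t) * t ^ i) (Ioi 0) := by
  refine (integrableOn_congr_fun (fun t _ => ?_) measurableSet_Ioi).mp
    (Real.GammaIntegral_convergent (s := i + 1) (by positivity))
  simp [Real.rpow_natCast]

theorem integral_exp_neg_mul_pow (i : ℕ) :
    ∫ t in Ioi (0 : ℝ), Real.exp (-t) * t ^ i = i ! := by
  rw [← Real.Gamma_nat_eq_factorial, Real.Gamma_eq_integral (by positivity)]
  refine setIntegral_congr_fun measurableSet_Ioi fun t _ => ?_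
  simp [Real.rpow_natCast]

theorem integrableOn_exp_neg_mul_eval (p : ℝ[X]) :
    IntegrableOn (fun t : ℝ => Real.exp (-t) * p.eval t) (Ioi 0) := by
  induction p using Polynomial.induction_on' with
  | add p q hp hq => simp only [eval_add, mul_add]; exact hp.add hq
  | monomial i a =>
    simp only [eval_monomial, mul_left_comm _ a]; exact (integrableOn_exp_neg_mul_pow i).const_mul a

noncomputable def laguerreIntegral : ℝ[X] →ₗ[ℝ] ℝ where
  toFun p := ∫ t in Ioi (0 : ℝ), Real.exp (-t) * p.eval t
  map_add' p q := by
    simp only [eval_add, mul_add]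
    exact integral_add (integrableOn_exp_neg_mul_eval p) (integrableOn_exp_neg_mul_eval q)
  map_smul' c p := by
    simp only [eval_smul, smul_eq_mul, mul_left_comm _ c, RingHom.id_apply]
    exact integral_const_mul c _

theorem laguerreIntegral_apply (p : ℝ[X]) :
    laguerreIntegral p = ∫ t in Ioi (0 : ℝ), Real.exp (-t) * p.eval t := rfl

theorem laguerreIntegral_X_pow (i : ℕ) : laguerreIntegral (X ^ i) = i ! := by
  simp [laguerreIntegral_apply, integral_exp_neg_mul_pow]

theorem laguerreIntegral_derivative (p : ℝ[X]) :
    laguerreIntegral (derivative p) = laguerreIntegral p - p.eval 0 := by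
  induction p using Polynomial.induction_on' with
  | add p q hp hq => simp only [map_add, eval_add, hp, hq]; ring
  | monomial i a =>
    simp only [← smul_X_eq_monomial, derivative_X_pow, ← smul_eq_C_mul, map_smul, eval_smul,
      laguerreIntegral_X_pow]
    cases i with
    | zero => simp
    | succ i => simp [Nat.factorial_succ]

theorem laguerreIntegral_derivative_sub_mul {f : ℝ[X]} (hf : f.eval 0 = 0) (r : ℝ[X]) :
    laguerreIntegral ((derivative f - f) * r) = -laguerreIntegral (f * derivative r) := by
  have hparts := laguerreIntegral_derivative (f * r)
  rw [derivative_mul, map_add, eval_mul, hf, zero_mul, sub_zero] at hparts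
  rw [sub_mul, map_sub]
  linarith

-- `(d/dx) (Q(x) e^{-x}) = (Q' - Q)(x) e^{-x}`
noncomputable def rodrigues (m : ℕ) : ℕ → ℝ[X]
  | 0 => X ^ m
  | k + 1 => derivative (rodrigues m k) - rodrigues m k

theorem iteratedDeriv_pow_mul_exp_neg (m k : ℕ) (x : ℝ) :
    iteratedDeriv k (fun y => y ^ m * Real.exp (-y)) x = (rodrigues m k).eval x * Real.exp (-x) := by
  induction k generalizing x with
  | zero => simp [rodrigues]
  | succ k ih =>
    rw [iteratedDeriv_succ, funext ih]
    have hderiv : HasDerivAt (fun y => (rodrigues m k).eval y * Real.exp (-y)) _ x :=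
      ((rodrigues m k).hasDerivAt x).mul (hasDerivAt_neg x).exp
    rw [hderiv.deriv, rodrigues, eval_sub]
    ring

theorem lag_eq_eval_rodrigues (m : ℕ) (x : ℝ) : lag m x = (m ! : ℝ)⁻¹ * (rodrigues m m).eval x := by
  rw [lag, iteratedDeriv_pow_mul_exp_neg, Real.exp_neg]
  field_simp

theorem X_pow_sub_dvd_rodrigues {m k : ℕ} (hk : k ≤ m) : X ^ (m - k) ∣ rodrigues m k := by
  induction k with
  | zero => simp [rodrigues]
  | succ k ih =>
    have hdvd := ih (by omega)
    have hsucc : m - k = m - (k + 1) + 1 := by omega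
    rw [hsucc] at hdvd
    exact dvd_sub (by simpa using pow_sub_one_dvd_derivative_of_pow_dvd hdvd)
      ((pow_dvd_pow X (Nat.le_succ _)).trans hdvd)

theorem rodrigues_eval_zero {m k : ℕ} (hk : k < m) : (rodrigues m k).eval 0 = 0 := by
  obtain ⟨q, hq⟩ := X_pow_sub_dvd_rodrigues hk.le
  rw [hq, eval_mul, eval_pow, eval_X, zero_pow (by omega), zero_mul]

theorem degree_rodrigues (m k : ℕ) : (rodrigues m k).degree = m := by
  induction k with
  | zero => simp [rodrigues]
  | succ k ih =>
    have hne : rodrigues m k ≠ 0 := fun h => by simp [h] at ih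
    rw [rodrigues, degree_sub_eq_right_of_degree_lt (degree_derivative_lt hne), ih]

theorem natDegree_rodrigues (m k : ℕ) : (rodrigues m k).natDegree = m :=
  natDegree_eq_of_degree_eq_some (degree_rodrigues m k)

theorem laguerreIntegral_rodrigues_mul {m k : ℕ} (hk : k ≤ m) (r : ℝ[X]) :
    laguerreIntegral (rodrigues m k * r) = (-1) ^ k * laguerreIntegral (X ^ m * derivative^[k] r) := by
  induction k generalizing r with
  | zero => simp [rodrigues]
  | succ k ih =>
    rw [rodrigues, laguerreIntegral_derivative_sub_mul (rodrigues_eval_zero (by omega)),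
      ih (by omega), Function.iterate_succ_apply, pow_succ]
    ring

theorem laguerreIntegral_rodrigues_mul_eq_zero {m : ℕ} {r : ℝ[X]} (hr : r.natDegree < m) :
    laguerreIntegral (rodrigues m m * r) = 0 := by
  rw [laguerreIntegral_rodrigues_mul le_rfl, iterate_derivative_eq_zero hr, mul_zero, map_zero,
    mul_zero]

theorem gauss_laguerre_exactness_general (n : ℕ) (x : Fin (n + 1) → ℝ) (w : Fin (n + 1) → ℝ)
    (hroot : ∀ k, lag (n + 1) (x k) = 0)
    (hw : ∀ j : ℕ, j ≤ n →
      ∑ k : Fin (n + 1), w k * x k ^ j = ∫ t in Set.Ioi (0 : ℝ), Real.exp (-t) * t ^ j) :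
    ∀ p : Polynomial ℝ, p.natDegree ≤ 2 * n + 1 →
      ∫ t in Set.Ioi (0 : ℝ), Real.exp (-t) * p.eval t =
        ∑ k : Fin (n + 1), w k * p.eval (x k) := by
  intro p hp
  have hnodes (k : Fin (n + 1)) : (rodrigues (n + 1) (n + 1)).eval (x k) = 0 := by
    simpa [lag_eq_eval_rodrigues, Nat.factorial_ne_zero] using hroot k
  have hexact : laguerreIntegral p = quadrature x w p := by
    refine linearMap_apply_eq_of_natDegree_le_two_mul_add_one (natDegree_rodrigues (n + 1) (n + 1))
      (fun j hj => ?_) (fun q hq => ?_) hp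
    · simp only [laguerreIntegral_apply, quadrature_apply, eval_pow, eval_X, hw j hj]
    · rw [laguerreIntegral_rodrigues_mul_eq_zero (by omega), quadrature_apply]
      simp [hnodes]
  rwa [laguerreIntegral_apply, quadrature_apply] at hexact

theorem gauss_laguerre_exactness (n : ℕ) (x : Fin (n + 1) → ℝ) (w : Fin (n + 1) → ℝ)
    (hx : Function.Injective x)
    (hroot : ∀ k, lag (n + 1) (x k) = 0)
    (hw : ∀ j : ℕ, j ≤ n →
      ∑ k : Fin (n + 1), w k * x k ^ j = ∫ t in Set.Ioi (0 : ℝ), Real.exp (-t) * t ^ j) :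
    ∀ p : Polynomial ℝ, p.natDegree ≤ 2 * n + 1 →
      ∫ t in Set.Ioi (0 : ℝ), Real.exp (-t) * p.eval t =
        ∑ k : Fin (n + 1), w k * p.eval (x k) :=
  gauss_laguerre_exactness_general n x w hroot hw
end

section
/- Let σ : [t_n, t_f] → (0,∞) be continuous and positive, c : [t_n, t_f] → ℝ continuous, x(t) = ∫_{t_n}^t σ(s) ds, and T(t) = exp(−x(t)). Then the volume rendering integral satisfies the change of variables ∫_{t_n}^{t_f} T(t) σ(t) c(t) dt = ∫_0^{x(t_f)} e^{-x} c(t(x)) dx, where t(x) is the inverse function of x(t). -/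
/-!
The optical depth `x(t) = ∫_{t_n}^t σ` is a primitive of `σ`, so the left-hand side is
`∫ g (x t) * x' t dt` with `g y = e^{-y} c (τ y)`, and the substitution `y = x t` gives the
right-hand side. The substitution only needs `g` continuous on `x '' [t_n, t_f]`: since `τ` is a
left inverse of the continuous map `x` on the compact interval, `τ` is continuous on the image.
-/

open Set intervalIntegral

theorem Set.LeftInvOn.continuousOn_image {α β : Type*} [TopologicalSpace α] [TopologicalSpace β]
    [T2Space β] {f : α → β} {g : β → α} {K : Set α} (hgf : LeftInvOn g f K) (hK : IsCompact K)
    (hf : ContinuousOn f K) : ContinuousOn g (f '' K) := by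
  refine continuousOn_iff_isClosed.2 fun C hC => ⟨f '' (K ∩ C), ?_, ?_⟩
  · exact ((hK.inter_right hC).image_of_continuousOn (hf.mono inter_subset_left)).isClosed
  · ext y
    constructor
    · rintro ⟨hy, t, ht, rfl⟩
      exact ⟨⟨t, ⟨ht, by rwa [mem_preimage, hgf ht] at hy⟩, rfl⟩, t, ht, rfl⟩
    · rintro ⟨⟨t, ht, rfl⟩, -⟩
      exact ⟨by rw [mem_preimage, hgf ht.1]; exact ht.2, t, ht.1, rfl⟩

theorem integral_comp_primitive_mul {a b : ℝ} {σ g : ℝ → ℝ} (hσ : ContinuousOn σ (uIcc a b))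
    (hg : ContinuousOn g ((fun t => ∫ s in a..t, σ s) '' (uIcc a b))) :
    ∫ t in a..b, g (∫ s in a..t, σ s) * σ t = ∫ y in (0 : ℝ)..(∫ s in a..b, σ s), g y := by
  have hderiv : ∀ t ∈ Ioo (min a b) (max a b),
      HasDerivWithinAt (fun t => ∫ s in a..t, σ s) (σ t) (Ioi t) t := by
    intro t ht
    have hσt : ContinuousOn σ (Ioo (min a b) (max a b)) := hσ.mono Ioo_subset_Icc_self
    refine (integral_hasDerivAt_right ?_ (hσt.stronglyMeasurableAtFilter isOpen_Ioo t ht)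
      (hσt.continuousAt (isOpen_Ioo.mem_nhds ht))).hasDerivWithinAt
    exact (hσ.mono (uIcc_subset_uIcc_left (Ioo_subset_Icc_self ht))).intervalIntegrable
  simpa only [Function.comp_apply, integral_same] using
    integral_comp_mul_deriv'' (continuousOn_primitive_interval hσ.integrableOn_Icc) hderiv hσ hg

theorem volume_rendering_change_of_variables_general (tn tf : ℝ) (htf : tn ≤ tf)
    (σ c : ℝ → ℝ)
    (hσc : ContinuousOn σ (Set.Icc tn tf))
    (hcc : ContinuousOn c (Set.Icc tn tf))
    (τ : ℝ → ℝ)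
    (hτ : ∀ t ∈ Set.Icc tn tf, τ (∫ s in tn..t, σ s) = t) :
    ∫ t in tn..tf, Real.exp (-(∫ s in tn..t, σ s)) * σ t * c t =
      ∫ y in (0 : ℝ)..(∫ s in tn..tf, σ s), Real.exp (-y) * c (τ y) := by
  rw [← uIcc_of_le htf] at hσc hcc hτ
  have hx : ContinuousOn (fun t => ∫ s in tn..t, σ s) (uIcc tn tf) :=
    continuousOn_primitive_interval hσc.integrableOn_Icc
  have hτc : ContinuousOn τ ((fun t => ∫ s in tn..t, σ s) '' (uIcc tn tf)) :=
    LeftInvOn.continuousOn_image hτ isCompact_uIcc hx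
  have hτmaps : MapsTo τ ((fun t => ∫ s in tn..t, σ s) '' (uIcc tn tf)) (uIcc tn tf) := by
    rintro _ ⟨t, ht, rfl⟩
    rwa [hτ t ht]
  rw [← integral_comp_primitive_mul (g := fun y => Real.exp (-y) * c (τ y)) hσc
    ((Real.continuous_exp.comp continuous_neg).continuousOn.mul (hcc.comp hτc hτmaps))]
  refine integral_congr fun t ht => ?_
  simp only [hτ t ht]
  ring

theorem volume_rendering_change_of_variables (tn tf : ℝ) (htf : tn ≤ tf)
    (σ c : ℝ → ℝ)
    (hσc : ContinuousOn σ (Set.Icc tn tf))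
    (hσpos : ∀ t ∈ Set.Icc tn tf, 0 < σ t)
    (hcc : ContinuousOn c (Set.Icc tn tf))
    (τ : ℝ → ℝ)
    (hτ : ∀ t ∈ Set.Icc tn tf, τ (∫ s in tn..t, σ s) = t) :
    ∫ t in tn..tf, Real.exp (-(∫ s in tn..t, σ s)) * σ t * c t =
      ∫ y in (0 : ℝ)..(∫ s in tn..tf, σ s), Real.exp (-y) * c (τ y) :=
  volume_rendering_change_of_variables_general tn tf htf σ c hσc hcc τ hτ
end
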